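/- arXiv:1903.02376 — 3 statements merged into one kernel-verified Lean document; each statement's English description precedes it below -/
import Mathlib

section
/- Let f : ℝ → ℝ be bounded, measurable and 1-periodic, and H ∈ (1/2, 1). Then H n^{−2H} ∫₀ⁿ f(u) u^{2H−1} du → (1/2) ∫₀¹ f(u) du as n → ∞. -/
open MeasureTheory Filter

theorem stmt_3 (H : ℝ) (hH : H ∈ Set.Ioo (1/2 : ℝ) 1)
    (f : ℝ → ℝ) (hfm : Measurable f) (M : ℝ) (hfb : ∀ t, |f t| ≤ M)
    (hper : Function.Periodic f 1) :
    Tendsto (fun n : ℕ =>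
        H * (n : ℝ) ^ (-(2 * H)) *
          ∫ u in Set.Ioc (0:ℝ) (n:ℝ), f u * u ^ (2 * H - 1))
      atTop (nhds ((1/2) * ∫ u in Set.Ioc (0:ℝ) 1, f u)) := by
  obtain ⟨hH1, hH2⟩ := hH
  have hH0 : 0 < H := by linarith
  set p : ℝ := 2 * H - 1 with hpdef
  have hp0 : 0 < p := by rw [hpdef]; linarith
  have hp1 : p ≤ 1 := by rw [hpdef]; linarith
  have hcontp : Continuous (fun x : ℝ => x ^ p) := Real.continuous_rpow_const hp0.le
  set c : ℝ := ∫ u in Set.Ioc (0:ℝ) 1, f u with hcdef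
  set g : ℝ → ℝ := fun u => f u - c with hgdef
  have hgm : Measurable g := hfm.sub measurable_const
  set B : ℝ := M + |c| with hBdef
  have hgb : ∀ t, |g t| ≤ B := by
    intro t
    calc |f t - c| ≤ |f t| + |c| := abs_sub _ _
    _ ≤ M + |c| := by linarith [hfb t]
  have hB0 : 0 ≤ B := le_trans (abs_nonneg _) (hgb 0)
  have hgper : Function.Periodic g 1 := fun x => by simp [hgdef, hper x]
  -- integrability of bounded measurable functions
  have hbddint : ∀ (h : ℝ → ℝ) (C : ℝ), Measurable h → (∀ t, |h t| ≤ C) →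
      ∀ a b : ℝ, IntervalIntegrable h volume a b := by
    intro h C hm hb a b
    refine (intervalIntegrable_const (c := C)).mono_fun hm.aestronglyMeasurable ?_
    refine Filter.Eventually.of_forall fun t => ?_
    have hC0 : 0 ≤ C := le_trans (abs_nonneg _) (hb 0)
    simpa [Real.norm_eq_abs, abs_of_nonneg hC0] using hb t
  -- integrability of h u * u ^ p on nonnegative intervals
  have hint : ∀ (h : ℝ → ℝ) (C : ℝ), Measurable h → (∀ t, |h t| ≤ C) →
      ∀ a b : ℝ, 0 ≤ a → a ≤ b →
      IntervalIntegrable (fun u => h u * u ^ p) volume a b := by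
    intro h C hm hb a b ha hab
    rw [intervalIntegrable_iff_integrableOn_Ioc_of_le hab]
    refine Integrable.mono' (integrable_const (C * b ^ p))
      ((hm.mul hcontp.measurable).aestronglyMeasurable) ?_
    filter_upwards [ae_restrict_mem measurableSet_Ioc] with u hu
    have hu0 : 0 ≤ u := le_trans ha hu.1.le
    have h1 : u ^ p ≤ b ^ p := Real.rpow_le_rpow hu0 hu.2 hp0.le
    have h2 : 0 ≤ u ^ p := Real.rpow_nonneg hu0 p
    rw [Real.norm_eq_abs, abs_mul, abs_of_nonneg h2]
    exact mul_le_mul (hb u) h1 h2 (le_trans (abs_nonneg _) (hb 0))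
  -- mean of g on [0,1] is zero
  have hg01 : (∫ t in (0:ℝ)..1, g t) = 0 := by
    have : (∫ t in (0:ℝ)..1, g t) = (∫ t in (0:ℝ)..1, f t) - ∫ t in (0:ℝ)..1, (c : ℝ) := by
      rw [← intervalIntegral.integral_sub (hbddint f M hfm hfb 0 1)
        (intervalIntegrable_const)]
    rw [this, intervalIntegral.integral_const,
      intervalIntegral.integral_of_le (zero_le_one), ← hcdef]
    simp
  -- subadditivity of rpow
  have subadd : ∀ k : ℕ, ((k : ℝ) + 1) ^ p ≤ (k : ℝ) ^ p + 1 := by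
    intro k
    have h := NNReal.rpow_add_le_add_rpow (k : NNReal) 1 hp0.le hp1
    have h2 := NNReal.coe_le_coe.mpr h
    push_cast at h2
    simpa using h2
  -- per-interval bound
  have hJ : ∀ k : ℕ, |∫ t in (k:ℝ)..((k:ℝ)+1), g t * t ^ p| ≤ B := by
    intro k
    have e1 : (∫ t in (k:ℝ)..((k:ℝ)+1), g t * t ^ p)
        = ∫ t in (0:ℝ)..1, g (t + (k:ℝ)) * (t + (k:ℝ)) ^ p := by
      rw [intervalIntegral.integral_comp_add_right (fun t => g t * t ^ p) (k:ℝ)]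
      norm_num [add_comm]
    have e2 : ∀ t : ℝ, g (t + (k:ℝ)) = g t := by
      intro t
      simpa using (hgper.nat_mul k) t
    have hint2 : IntervalIntegrable (fun t => g t * (t + (k:ℝ)) ^ p) volume 0 1 := by
      rw [intervalIntegrable_iff_integrableOn_Ioc_of_le zero_le_one]
      refine Integrable.mono' (integrable_const (B * ((k:ℝ) + 1) ^ p))
        ((hgm.mul (hcontp.comp (continuous_add_right (k:ℝ))).measurable).aestronglyMeasurable) ?_
      filter_upwards [ae_restrict_mem measurableSet_Ioc] with u hu
      have hu0 : (0:ℝ) ≤ u + k := by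
        have h1 := hu.1
        have h2 : (0:ℝ) ≤ (k:ℝ) := Nat.cast_nonneg k
        linarith
      have h1 : (u + (k:ℝ)) ^ p ≤ ((k:ℝ) + 1) ^ p :=
        Real.rpow_le_rpow hu0 (by linarith [hu.2]) hp0.le
      have h2 : 0 ≤ (u + (k:ℝ)) ^ p := Real.rpow_nonneg hu0 p
      rw [Real.norm_eq_abs, abs_mul, abs_of_nonneg h2]
      exact mul_le_mul (hgb u) h1 h2 hB0
    have e3 : (∫ t in (0:ℝ)..1, g t * (k:ℝ) ^ p) = 0 := by
      rw [intervalIntegral.integral_mul_const, hg01, zero_mul]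
    have e4 : (∫ t in (k:ℝ)..((k:ℝ)+1), g t * t ^ p)
        = ∫ t in (0:ℝ)..1, g t * ((t + (k:ℝ)) ^ p - (k:ℝ) ^ p) := by
      rw [e1]
      have : (∫ t in (0:ℝ)..1, g (t + (k:ℝ)) * (t + (k:ℝ)) ^ p)
          = ∫ t in (0:ℝ)..1, g t * (t + (k:ℝ)) ^ p := by
        apply intervalIntegral.integral_congr
        intro t _
        simp only [e2]
      have e5 : (∫ t in (0:ℝ)..1, g t * ((t + (k:ℝ)) ^ p - (k:ℝ) ^ p))
          = (∫ t in (0:ℝ)..1, g t * (t + (k:ℝ)) ^ p)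
            - ∫ t in (0:ℝ)..1, g t * (k:ℝ) ^ p := by
        rw [← intervalIntegral.integral_sub hint2
          ((hbddint g B hgm hgb 0 1).mul_const _)]
        apply intervalIntegral.integral_congr
        intro t _
        ring
      rw [this, e5, e3, sub_zero]
    rw [e4, ← Real.norm_eq_abs]
    have := intervalIntegral.norm_integral_le_of_norm_le_const
      (a := (0:ℝ)) (b := 1) (C := B) (f := fun t => g t * ((t + (k:ℝ)) ^ p - (k:ℝ) ^ p)) ?_
    · simpa using this
    · intro t ht
      rw [Set.uIoc_of_le zero_le_one] at ht
      have ht0 : 0 < t := ht.1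
      have hk0 : (0:ℝ) ≤ k := Nat.cast_nonneg k
      have hd0 : 0 ≤ (t + (k:ℝ)) ^ p - (k:ℝ) ^ p := by
        have := Real.rpow_le_rpow hk0 (by linarith : (k:ℝ) ≤ t + k) hp0.le
        linarith
      have hd1 : (t + (k:ℝ)) ^ p - (k:ℝ) ^ p ≤ 1 := by
        have h1 : (t + (k:ℝ)) ^ p ≤ ((k:ℝ) + 1) ^ p :=
          Real.rpow_le_rpow (by positivity) (by linarith [ht.2]) hp0.le
        have h2 := subadd k
        linarith
      rw [Real.norm_eq_abs, abs_mul, abs_of_nonneg hd0]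
      calc |g t| * ((t + (k:ℝ)) ^ p - (k:ℝ) ^ p) ≤ B * 1 :=
        mul_le_mul (hgb t) hd1 hd0 hB0
      _ = B := mul_one B
  -- sum bound
  have hsum : ∀ n : ℕ, |∫ t in (0:ℝ)..(n:ℝ), g t * t ^ p| ≤ B * n := by
    intro n
    have hadj : ∀ k, k < n → IntervalIntegrable (fun t => g t * t ^ p) volume
        ((k:ℕ) : ℝ) ((k+1 : ℕ) : ℝ) := by
      intro k _
      push_cast
      exact hint g B hgm hgb k (k+1) (Nat.cast_nonneg k) (by linarith)
    have := intervalIntegral.sum_integral_adjacent_intervals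
      (a := fun k : ℕ => (k : ℝ)) (μ := volume) (f := fun t => g t * t ^ p) hadj
    simp only [Nat.cast_zero] at this
    rw [← this]
    calc |∑ k ∈ Finset.range n, ∫ t in ((k:ℕ):ℝ)..((k+1:ℕ):ℝ), g t * t ^ p|
        ≤ ∑ k ∈ Finset.range n, |∫ t in ((k:ℕ):ℝ)..((k+1:ℕ):ℝ), g t * t ^ p| :=
          Finset.abs_sum_le_sum_abs _ _
      _ ≤ ∑ _k ∈ Finset.range n, B := by
          refine Finset.sum_le_sum fun k _ => ?_
          have := hJ k
          push_cast
          exact this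
      _ = B * n := by simp [mul_comm]
  -- value of the full integral
  have hval : ∀ n : ℕ, (∫ u in Set.Ioc (0:ℝ) (n:ℝ), f u * u ^ p)
      = (∫ t in (0:ℝ)..(n:ℝ), g t * t ^ p) + c * (n:ℝ) ^ (2*H) / (2*H) := by
    intro n
    rw [← intervalIntegral.integral_of_le (Nat.cast_nonneg n : (0:ℝ) ≤ n)]
    have e1 : (∫ u in (0:ℝ)..(n:ℝ), f u * u ^ p)
        = ∫ u in (0:ℝ)..(n:ℝ), (g u * u ^ p + c * u ^ p) := by
      apply intervalIntegral.integral_congr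
      intro u _
      simp [hgdef]
      ring
    rw [e1, intervalIntegral.integral_add
      (hint g B hgm hgb 0 n (le_refl 0) (Nat.cast_nonneg n))
      (hint (fun _ => c) |c| measurable_const (fun _ => le_rfl) 0 n (le_refl 0)
        (Nat.cast_nonneg n))]
    congr 1
    rw [intervalIntegral.integral_const_mul,
      integral_rpow (Or.inl (by linarith : (-1:ℝ) < p))]
    have h0 : (0:ℝ) ^ (p + 1) = 0 := Real.zero_rpow (by linarith)
    have hp2H : p + 1 = 2 * H := by rw [hpdef]; ring
    rw [h0, hp2H]
    ring
  -- the error term tends to zero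
  have h0lim : Tendsto (fun n : ℕ =>
      H * (n:ℝ) ^ (-(2*H)) * ∫ t in (0:ℝ)..(n:ℝ), g t * t ^ p) atTop (nhds 0) := by
    apply squeeze_zero_norm' (a := fun n : ℕ => H * B * (n:ℝ) ^ (1 - 2*H))
    · filter_upwards [eventually_ge_atTop 1] with n hn
      have hn0 : (0:ℝ) < n := by exact_mod_cast Nat.lt_of_lt_of_le Nat.zero_lt_one hn
      have hrp : 0 ≤ (n:ℝ) ^ (-(2*H)) := Real.rpow_nonneg hn0.le _
      rw [Real.norm_eq_abs, abs_mul, abs_mul, abs_of_nonneg hH0.le, abs_of_nonneg hrp]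
      calc H * (n:ℝ) ^ (-(2*H)) * |∫ t in (0:ℝ)..(n:ℝ), g t * t ^ p|
          ≤ H * (n:ℝ) ^ (-(2*H)) * (B * n) := by
            apply mul_le_mul_of_nonneg_left (hsum n)
            positivity
        _ = H * B * (n:ℝ) ^ (1 - 2*H) := by
            rw [show (1 - 2*H : ℝ) = -(2*H) + 1 by ring, Real.rpow_add hn0,
              Real.rpow_one]
            ring
    · have h1 : Tendsto (fun x : ℝ => x ^ (1 - 2*H)) atTop (nhds 0) := by
        have := tendsto_rpow_neg_atTop (y := 2*H - 1) (by linarith)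
        simpa [show -(2*H - 1) = 1 - 2*H by ring] using this
      have h2 := (h1.comp (tendsto_natCast_atTop_atTop (R := ℝ))).const_mul (H * B)
      simpa using h2
  -- conclusion
  have hfinal : Tendsto (fun n : ℕ => c/2 +
      H * (n:ℝ) ^ (-(2*H)) * ∫ t in (0:ℝ)..(n:ℝ), g t * t ^ p) atTop (nhds (c/2 + 0)) :=
    tendsto_const_nhds.add h0lim
  have heq : ∀ᶠ n : ℕ in atTop,
      (c/2 + H * (n:ℝ) ^ (-(2*H)) * ∫ t in (0:ℝ)..(n:ℝ), g t * t ^ p)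
      = H * (n:ℝ) ^ (-(2*H)) * ∫ u in Set.Ioc (0:ℝ) (n:ℝ), f u * u ^ (2*H - 1) := by
    filter_upwards [eventually_ge_atTop 1] with n hn
    have hn0 : (0:ℝ) < n := by exact_mod_cast Nat.lt_of_lt_of_le Nat.zero_lt_one hn
    have hrp : (n:ℝ) ^ (-(2*H)) * (n:ℝ) ^ (2*H) = 1 := by
      rw [← Real.rpow_add hn0]
      norm_num
    rw [show (2*H - 1 : ℝ) = p from rfl, hval n]
    have hc2 : H * (n:ℝ) ^ (-(2*H)) * (c * (n:ℝ) ^ (2*H) / (2*H)) = c/2 := by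
      have e : H * (n:ℝ) ^ (-(2*H)) * (c * (n:ℝ) ^ (2*H) / (2*H))
          = (H / (2*H)) * c * ((n:ℝ) ^ (-(2*H)) * (n:ℝ) ^ (2*H)) := by
        field_simp
      rw [e, hrp, mul_one]
      rw [show H / (2*H) = 1/2 by field_simp]
      ring
    rw [mul_add, hc2]
    ring
  rw [show (1/2 : ℝ) * (∫ u in Set.Ioc (0:ℝ) 1, f u) = c/2 + 0 by rw [← hcdef]; ring]
  exact hfinal.congr' heq
end

section
/- Let f : ℝ → ℝ be bounded, measurable and 1-periodic, and H ∈ (1/2, 1). Then H(2H−1) n^{−2H} ∫₀ⁿ ∫₀ⁿ f(u) f(v) |u−v|^{2H−2} du dv → (∫₀¹ f(s) ds)² as n → ∞. -/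
open MeasureTheory Filter Set intervalIntegral Real

section Aux

variable {α : ℝ}

lemma absPow_ii (hα : -1 < α) (a b : ℝ) :
    IntervalIntegrable (fun x : ℝ => |x| ^ α) volume a b := by
  have h0 : ∀ c : ℝ, 0 ≤ c → IntervalIntegrable (fun x : ℝ => |x| ^ α) volume 0 c := by
    intro c hc
    have h := intervalIntegrable_rpow' (a := 0) (b := c) hα
    rw [intervalIntegrable_iff, uIoc_of_le hc] at h ⊢
    refine h.congr_fun (fun x hx => ?_) measurableSet_Ioc
    rw [abs_of_pos hx.1]
  have h1 : ∀ c : ℝ, IntervalIntegrable (fun x : ℝ => |x| ^ α) volume 0 c := by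
    intro c
    rcases le_total 0 c with hc | hc
    · exact h0 c hc
    · rw [IntervalIntegrable.iff_comp_neg]
      simp only [abs_neg, neg_zero]
      exact h0 (-c) (by linarith)
  exact (h1 a).symm.trans (h1 b)

lemma K_ii (hα : -1 < α) (u a b : ℝ) :
    IntervalIntegrable (fun v => |u - v| ^ α) volume a b := by
  have h := (absPow_ii hα (u - a) (u - b)).comp_sub_left u
  simpa using h

lemma gK_ii (hα : -1 < α) {g : ℝ → ℝ} (hg : Measurable g) {M' : ℝ}
    (hgb : ∀ t, |g t| ≤ M') (u a b : ℝ) :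
    IntervalIntegrable (fun v => g v * |u - v| ^ α) volume a b := by
  rw [intervalIntegrable_iff] at *
  refine Integrable.bdd_mul (K_ii hα u a b).def' hg.aestronglyMeasurable.restrict (c := M') (Filter.Eventually.of_forall fun x => ?_)
  simpa [Real.norm_eq_abs] using hgb x

lemma B_formula (hα : -1 < α) {n u : ℝ} (h0u : 0 ≤ u) (hun : u ≤ n) :
    ∫ v in (0:ℝ)..n, |u - v| ^ α = (u ^ (α+1) + (n - u) ^ (α+1)) / (α+1) := by
  have hβ : (0:ℝ) < α + 1 := by linarith
  rw [← integral_add_adjacent_intervals (K_ii hα u 0 u) (K_ii hα u u n)]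
  have e1 : ∫ v in (0:ℝ)..u, |u - v| ^ α = ∫ v in (0:ℝ)..u, (u - v) ^ α := by
    refine integral_congr fun v hv => ?_
    rw [uIcc_of_le h0u] at hv
    rw [abs_of_nonneg (by linarith [hv.2])]
  have e2 : ∫ v in u..n, |u - v| ^ α = ∫ v in u..n, (v - u) ^ α := by
    refine integral_congr fun v hv => ?_
    rw [uIcc_of_le hun] at hv
    rw [abs_sub_comm, abs_of_nonneg (by linarith [hv.1])]
  rw [e1, e2, integral_comp_sub_left (fun x => x ^ α) u, integral_comp_sub_right (fun x => x ^ α) u,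
    integral_rpow (Or.inl hα), integral_rpow (Or.inl hα)]
  rw [sub_zero, sub_self, Real.zero_rpow (by positivity)]
  ring

end Aux

section Aux2

variable {α : ℝ}

lemma rpow_lip (hα0 : α < 0) {a b c : ℝ} (hc : 1 ≤ c) (hca : c ≤ a) (hcb : c ≤ b) :
    |a ^ α - b ^ α| ≤ (-α) * c ^ (α - 1) * |a - b| := by
  have hc0 : (0:ℝ) < c := by linarith
  have hder : ∀ x ∈ Ici c, HasDerivWithinAt (fun x : ℝ => x ^ α) (α * x ^ (α - 1)) (Ici c) x :=
    fun x hx =>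
      (Real.hasDerivAt_rpow_const (p := α) (Or.inl (ne_of_gt (lt_of_lt_of_le hc0 hx)))).hasDerivWithinAt
  have hbd : ∀ x ∈ Ici c, ‖α * x ^ (α - 1)‖ ≤ (-α) * c ^ (α - 1) := by
    intro x hx
    simp only [mem_Ici] at hx
    rw [norm_mul, Real.norm_eq_abs, Real.norm_eq_abs, abs_of_neg hα0,
      abs_of_nonneg (Real.rpow_nonneg (by linarith) _)]
    exact mul_le_mul_of_nonneg_left
      (Real.rpow_le_rpow_of_nonpos hc0 hx (by linarith)) (by linarith)
  have := (convex_Ici c).norm_image_sub_le_of_norm_hasDerivWithin_le hder hbd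
    (mem_Ici.2 hcb) (mem_Ici.2 hca)
  simpa [Real.norm_eq_abs] using this

lemma g_ii {g : ℝ → ℝ} (hg : Measurable g) {M' : ℝ} (hgb : ∀ t, |g t| ≤ M') (a b : ℝ) :
    IntervalIntegrable g volume a b := by
  rw [intervalIntegrable_iff]
  refine Integrable.mono' (g := fun _ => M') ?_ hg.aestronglyMeasurable.restrict ?_
  · exact integrableOn_const measure_Ioc_lt_top.ne
  · exact Filter.Eventually.of_forall fun x => by simpa [Real.norm_eq_abs] using hgb x

lemma T_near (hα : -1 < α) (hα0 : α < 0) {g : ℝ → ℝ} (hg : Measurable g) {M' : ℝ}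
    (hgb : ∀ t, |g t| ≤ M') (t : ℝ) :
    |∫ s in (0:ℝ)..1, g s * |t - s| ^ α| ≤ M' * (1 + 2 / (α + 1)) := by
  have hM' : 0 ≤ M' := le_trans (abs_nonneg _) (hgb 0)
  have h01 : (0:ℝ) ≤ 1 := zero_le_one
  calc |∫ s in (0:ℝ)..1, g s * |t - s| ^ α|
      ≤ ∫ s in (0:ℝ)..1, |g s * |t - s| ^ α| := by
        apply intervalIntegral.abs_integral_le_integral_abs h01
    _ ≤ ∫ s in (0:ℝ)..1, M' * |t - s| ^ α := by
        apply intervalIntegral.integral_mono_on h01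
        · exact ((gK_ii hα hg hgb t 0 1).abs)
        · exact (K_ii hα t 0 1).const_mul M'
        · intro s _
          rw [abs_mul, abs_of_nonneg (Real.rpow_nonneg (abs_nonneg _) α)]
          exact mul_le_mul_of_nonneg_right (hgb s) (Real.rpow_nonneg (abs_nonneg _) α)
    _ = M' * ∫ s in (0:ℝ)..1, |t - s| ^ α := intervalIntegral.integral_const_mul _ _
    _ ≤ M' * (1 + 2 / (α + 1)) := by
        refine mul_le_mul_of_nonneg_left ?_ hM'
        rw [intervalIntegral.integral_comp_sub_left (fun w => |w| ^ α) t, sub_zero]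
        have h1 : ∫ w in (t-1)..t, |w| ^ α = ∫ w in Ioc (t-1) t, |w| ^ α :=
          intervalIntegral.integral_of_le (by linarith)
        rw [h1]
        have hind : Integrable ((Ioc (-1:ℝ) 1).indicator fun w => |w| ^ α) volume := by
          refine IntegrableOn.integrable_indicator ?_ measurableSet_Ioc
          rw [← intervalIntegrable_iff_integrableOn_Ioc_of_le (by norm_num : (-1:ℝ) ≤ 1)]
          exact absPow_ii hα (-1) 1
        calc ∫ w in Ioc (t-1) t, |w| ^ α
            ≤ ∫ w in Ioc (t-1) t, (1 + (Ioc (-1:ℝ) 1).indicator (fun w => |w| ^ α) w) := by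
              refine setIntegral_mono_on ?_ ?_ measurableSet_Ioc ?_
              · rw [← intervalIntegrable_iff_integrableOn_Ioc_of_le (by linarith : t - 1 ≤ t)]
                exact absPow_ii hα (t-1) t
              · exact ((integrableOn_const measure_Ioc_lt_top.ne)).add hind.integrableOn
              · intro w _
                by_cases hw : w ∈ Ioc (-1:ℝ) 1
                · rw [indicator_of_mem hw]; linarith [Real.rpow_nonneg (abs_nonneg w) α]
                · rw [indicator_of_notMem hw]
                  have h1w : 1 ≤ |w| := by
                    simp only [mem_Ioc, not_and_or, not_lt, not_le] at hw
                    rcases hw with hw | hw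
                    · rw [abs_of_nonpos (by linarith)]; linarith
                    · rw [abs_of_pos (by linarith)]; linarith
                  simpa using Real.rpow_le_one_of_one_le_of_nonpos h1w hα0.le
          _ ≤ 1 + 2 / (α + 1) := by
              rw [integral_add (integrableOn_const measure_Ioc_lt_top.ne : IntegrableOn (fun _ => (1:ℝ)) (Ioc (t-1) t) volume) hind.integrableOn]
              have e0 : ∫ _ in Ioc (t-1) t, (1:ℝ) = 1 := by
                simp [Real.volume_Ioc]
              rw [e0]
              gcongr
              calc ∫ w in Ioc (t-1) t, (Ioc (-1:ℝ) 1).indicator (fun w => |w| ^ α) w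
                  ≤ ∫ w, (Ioc (-1:ℝ) 1).indicator (fun w => |w| ^ α) w := by
                    refine setIntegral_le_integral hind ?_
                    refine Filter.Eventually.of_forall fun w => ?_
                    simp only [Pi.zero_apply]
                    by_cases hw : w ∈ Ioc (-1:ℝ) 1
                    · rw [indicator_of_mem hw]; exact Real.rpow_nonneg (abs_nonneg _) _
                    · rw [indicator_of_notMem hw]
                _ = ∫ w in Ioc (-1:ℝ) 1, |w| ^ α := integral_indicator measurableSet_Ioc
                _ = 2 / (α + 1) := by
                    rw [← intervalIntegral.integral_of_le (by norm_num : (-1:ℝ) ≤ 1),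
                      ← intervalIntegral.integral_add_adjacent_intervals
                        (absPow_ii hα (-1) 0) (absPow_ii hα 0 1)]
                    have e1 : ∫ w in (-1:ℝ)..0, |w| ^ α = ∫ w in (0:ℝ)..1, |w| ^ α := by
                      have := intervalIntegral.integral_comp_neg (fun w => |w| ^ α) (a := 0) (b := 1)
                      simp only [abs_neg, neg_zero, neg_neg] at this
                      rw [← this]
                    have e2 : ∫ w in (0:ℝ)..1, |w| ^ α = ∫ w in (0:ℝ)..1, w ^ α := by
                      refine intervalIntegral.integral_congr fun w hw => ?_
                      rw [uIcc_of_le h01] at hw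
                      rw [abs_of_nonneg hw.1]
                    rw [e1, e2, integral_rpow (Or.inl hα), Real.one_rpow,
                      Real.zero_rpow (ne_of_gt (by linarith))]
                    ring

end Aux2

section Aux3

variable {α : ℝ}

lemma T_far (hα : -1 < α) (hα0 : α < 0) {g : ℝ → ℝ} (hg : Measurable g) {M' : ℝ}
    (hgb : ∀ t, |g t| ≤ M') (hgz : ∫ s in (0:ℝ)..1, g s = 0) {t : ℝ} (ht : 2 ≤ |t|) :
    |∫ s in (0:ℝ)..1, g s * |t - s| ^ α| ≤ M' * (-α) * (|t| - 1) ^ (α - 1) := by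
  have hM' : 0 ≤ M' := le_trans (abs_nonneg _) (hgb 0)
  have key : ∫ s in (0:ℝ)..1, g s * |t - s| ^ α
      = ∫ s in (0:ℝ)..1, g s * (|t - s| ^ α - |t| ^ α) := by
    have h2 : ∫ s in (0:ℝ)..1, g s * (|t - s| ^ α - |t| ^ α)
        = (∫ s in (0:ℝ)..1, g s * |t - s| ^ α) - ∫ s in (0:ℝ)..1, g s * |t| ^ α := by
      rw [← intervalIntegral.integral_sub (gK_ii hα hg hgb t 0 1) ((g_ii hg hgb 0 1).mul_const _)]
      congr 1; ext s; ring
    rw [h2, intervalIntegral.integral_mul_const, hgz, zero_mul, sub_zero]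
  rw [key]
  have bound : ∀ s ∈ Set.uIoc (0:ℝ) 1, ‖g s * (|t - s| ^ α - |t| ^ α)‖
      ≤ M' * ((-α) * (|t| - 1) ^ (α - 1)) := by
    intro s hs
    rw [uIoc_of_le (zero_le_one' ℝ)] at hs
    have hs0 : 0 < s := hs.1
    have hs1 : s ≤ 1 := hs.2
    have hca : |t| - 1 ≤ |t - s| := by
      have := abs_sub_abs_le_abs_sub t s
      have hsabs : |s| ≤ 1 := by rw [abs_of_pos hs0]; exact hs1
      calc |t| - 1 ≤ |t| - |s| := by linarith
        _ ≤ |t - s| := abs_sub_abs_le_abs_sub t s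
    have h1 : abs (|t - s| ^ α - |t| ^ α) ≤ (-α) * (|t| - 1) ^ (α - 1) * abs (|t - s| - |t|) :=
      rpow_lip hα0 (by linarith) hca (by linarith)
    have h2 : abs (|t - s| - |t|) ≤ 1 := by
      calc abs (|t - s| - |t|) ≤ |(t - s) - t| := abs_abs_sub_abs_le_abs_sub _ _
        _ = |s| := by rw [show t - s - t = -s from by ring, abs_neg]
        _ ≤ 1 := by rw [abs_of_pos hs0]; exact hs1
    rw [norm_mul, Real.norm_eq_abs, Real.norm_eq_abs]
    have hc1 : (0:ℝ) ≤ (-α) * (|t| - 1) ^ (α - 1) := by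
      apply mul_nonneg (by linarith) (Real.rpow_nonneg (by linarith) _)
    calc |g s| * abs (|t - s| ^ α - |t| ^ α)
        ≤ M' * ((-α) * (|t| - 1) ^ (α - 1) * abs (|t - s| - |t|)) :=
          mul_le_mul (hgb s) h1 (abs_nonneg _) hM'
      _ ≤ M' * ((-α) * (|t| - 1) ^ (α - 1) * 1) := by
          refine mul_le_mul_of_nonneg_left ?_ hM'
          exact mul_le_mul_of_nonneg_left h2 hc1
      _ = M' * ((-α) * (|t| - 1) ^ (α - 1)) := by ring
  have h := intervalIntegral.norm_integral_le_of_norm_le_const bound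
  simp only [Real.norm_eq_abs, sub_zero, abs_one, mul_one] at h
  calc |∫ s in (0:ℝ)..1, g s * (|t - s| ^ α - |t| ^ α)|
      ≤ M' * ((-α) * (|t| - 1) ^ (α - 1)) := h
    _ = M' * (-α) * (|t| - 1) ^ (α - 1) := by ring

lemma T_all (hα : -1 < α) (hα0 : α < 0) {g : ℝ → ℝ} (hg : Measurable g) {M' : ℝ}
    (hgb : ∀ t, |g t| ≤ M') (hgz : ∫ s in (0:ℝ)..1, g s = 0) (t : ℝ) :
    |∫ s in (0:ℝ)..1, g s * |t - s| ^ α|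
      ≤ (M' * (3:ℝ) ^ (1-α) * ((1 + 2/(α+1)) + (-α))) * (1 + |t|) ^ (α-1) := by
  have hM' : 0 ≤ M' := le_trans (abs_nonneg _) (hgb 0)
  have hc0' : (0:ℝ) ≤ 1 + 2/(α+1) := by
    have : (0:ℝ) ≤ 2/(α+1) := div_nonneg (by norm_num) (by linarith)
    linarith
  have hc1' : (0:ℝ) ≤ (1 + 2/(α+1)) + (-α) := by linarith
  have h3 : (3:ℝ) ^ (1-α) * (3:ℝ) ^ (α-1) = 1 := by
    rw [← Real.rpow_add (by norm_num)]; norm_num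
  have h3pos : (0:ℝ) < (3:ℝ) ^ (1-α) := Real.rpow_pos_of_pos (by norm_num) _
  rcases le_or_gt (|t|) 2 with h | h
  · have hb := T_near hα hα0 hg hgb t
    have hp : (3:ℝ) ^ (α-1) ≤ (1 + |t|) ^ (α-1) :=
      Real.rpow_le_rpow_of_nonpos (by positivity) (by linarith) (by linarith)
    calc |∫ s in (0:ℝ)..1, g s * |t - s| ^ α| ≤ M' * (1 + 2/(α+1)) := hb
      _ = (M' * (3:ℝ) ^ (1-α)) * ((1 + 2/(α+1)) * (3:ℝ) ^ (α-1)) := by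
          rw [show (M' * (3:ℝ)^(1-α)) * ((1 + 2/(α+1)) * (3:ℝ)^(α-1))
              = M' * (1 + 2/(α+1)) * ((3:ℝ)^(1-α) * (3:ℝ)^(α-1)) from by ring, h3, mul_one]
      _ ≤ (M' * (3:ℝ) ^ (1-α)) * (((1 + 2/(α+1)) + (-α)) * (1 + |t|) ^ (α-1)) := by
          refine mul_le_mul_of_nonneg_left ?_ (by positivity)
          exact mul_le_mul (by linarith) hp (Real.rpow_nonneg (by norm_num) _) hc1'
      _ = (M' * (3:ℝ) ^ (1-α) * ((1 + 2/(α+1)) + (-α))) * (1 + |t|) ^ (α-1) := by ring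
  · have hb := T_far hα hα0 hg hgb hgz h.le
    have hp : (|t| - 1) ^ (α-1) ≤ (3:ℝ) ^ (1-α) * (1 + |t|) ^ (α-1) := by
      have h1 : (1 + |t|)/3 ≤ |t| - 1 := by linarith
      have h2 : (0:ℝ) < (1 + |t|)/3 := by linarith
      calc (|t| - 1) ^ (α-1) ≤ ((1 + |t|)/3) ^ (α-1) :=
            Real.rpow_le_rpow_of_nonpos h2 h1 (by linarith)
        _ = (1 + |t|) ^ (α-1) / (3:ℝ) ^ (α-1) :=
            Real.div_rpow (by linarith [abs_nonneg t]) (by norm_num : (0:ℝ) ≤ 3) _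
        _ = (3:ℝ) ^ (1-α) * (1 + |t|) ^ (α-1) := by
            rw [div_eq_mul_inv, ← Real.rpow_neg (by norm_num), show -(α-1) = 1-α from by ring]
            ring
    calc |∫ s in (0:ℝ)..1, g s * |t - s| ^ α| ≤ M' * (-α) * (|t| - 1) ^ (α-1) := hb
      _ ≤ M' * (-α) * ((3:ℝ) ^ (1-α) * (1 + |t|) ^ (α-1)) := by
          refine mul_le_mul_of_nonneg_left hp (by nlinarith)
      _ ≤ (M' * (3:ℝ) ^ (1-α) * ((1 + 2/(α+1)) + (-α))) * (1 + |t|) ^ (α-1) := by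
          have hr : (0:ℝ) ≤ (1 + |t|) ^ (α-1) := Real.rpow_nonneg (by positivity) _
          nlinarith [mul_nonneg hM' hr, mul_nonneg (mul_nonneg hM' h3pos.le) hr,
            mul_nonneg (mul_nonneg (mul_nonneg hM' h3pos.le) hr) hc0']

lemma sum_dist {γ : ℝ} (hγ : γ < -1) (n : ℕ) (u : ℝ) (hu0 : 0 < u) :
    ∑ k ∈ Finset.range n, (1 + |u - (k:ℝ)|) ^ γ ≤ 2 * ∑' j : ℕ, ((j:ℝ)+1) ^ γ := by
  have hγ0 : γ ≤ 0 := by linarith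
  have hS : Summable (fun j : ℕ => ((j:ℝ)+1) ^ γ) := by
    have h0 := (Real.summable_nat_rpow (p := γ)).mpr hγ
    have h1 := (summable_nat_add_iff (f := fun n : ℕ => (n:ℝ) ^ γ) 1).mpr h0
    exact h1.congr fun j => by push_cast; ring_nf
  have hS0 : ∀ j : ℕ, (0:ℝ) ≤ ((j:ℝ)+1) ^ γ := fun j => Real.rpow_nonneg (by positivity) _
  set p : ℕ := ⌊u⌋.toNat with hpdef
  have hfl : ((p:ℕ):ℤ) = ⌊u⌋ := Int.toNat_of_nonneg (Int.floor_nonneg.2 hu0.le)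
  have hpu : (p:ℝ) ≤ u := by
    have := Int.floor_le u
    rw [show ((p:ℕ):ℝ) = ((⌊u⌋:ℤ):ℝ) from by exact_mod_cast hfl]
    exact this
  have hup : u ≤ (p:ℝ) + 1 := by
    have := (Int.lt_floor_add_one u).le
    rw [show ((p:ℕ):ℝ) = ((⌊u⌋:ℤ):ℝ) from by exact_mod_cast hfl]
    exact this
  have key : ∀ k ∈ Finset.range n, (1 + |u - (k:ℝ)|) ^ γ
      ≤ if k ≤ p then (((p - k : ℕ):ℝ) + 1) ^ γ else (((k - (p+1) : ℕ):ℝ) + 1) ^ γ := by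
    intro k _
    split_ifs with hk
    · have h1 : ((p - k:ℕ):ℝ) = (p:ℝ) - k := by
        rw [Nat.cast_sub hk]
      have hkp : (k:ℝ) ≤ (p:ℝ) := by exact_mod_cast hk
      have habs : |u - (k:ℝ)| = u - k := abs_of_nonneg (by linarith)
      refine Real.rpow_le_rpow_of_nonpos (by positivity) ?_ hγ0
      rw [h1, habs]; linarith
    · push_neg at hk
      have hk' : p + 1 ≤ k := hk
      have h1 : ((k - (p+1):ℕ):ℝ) = (k:ℝ) - ((p:ℝ) + 1) := by
        rw [Nat.cast_sub hk']; push_cast; ring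
      have hkp : ((p:ℝ) + 1) ≤ (k:ℝ) := by exact_mod_cast hk'
      have habs : |u - (k:ℝ)| = (k:ℝ) - u := by
        rw [abs_sub_comm]; exact abs_of_nonneg (by linarith)
      refine Real.rpow_le_rpow_of_nonpos (by positivity) ?_ hγ0
      rw [h1, habs]; linarith
  calc ∑ k ∈ Finset.range n, (1 + |u - (k:ℝ)|) ^ γ
      ≤ ∑ k ∈ Finset.range n,
          (if k ≤ p then (((p - k : ℕ):ℝ) + 1) ^ γ else (((k - (p+1) : ℕ):ℝ) + 1) ^ γ) :=
        Finset.sum_le_sum key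
    _ = (∑ k ∈ (Finset.range n).filter (· ≤ p), (((p - k : ℕ):ℝ) + 1) ^ γ)
        + ∑ k ∈ (Finset.range n).filter (fun k => ¬ k ≤ p), (((k - (p+1) : ℕ):ℝ) + 1) ^ γ :=
        Finset.sum_ite _ _
    _ ≤ (∑' j : ℕ, ((j:ℝ)+1) ^ γ) + ∑' j : ℕ, ((j:ℝ)+1) ^ γ := by
        gcongr
        · -- part 1
          have hsub : (Finset.range n).filter (· ≤ p) ⊆ Finset.range (p+1) := by
            intro k hk
            simp only [Finset.mem_filter, Finset.mem_range] at hk ⊢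
            omega
          calc ∑ k ∈ (Finset.range n).filter (· ≤ p), (((p - k : ℕ):ℝ) + 1) ^ γ
              ≤ ∑ k ∈ Finset.range (p+1), (((p - k : ℕ):ℝ) + 1) ^ γ := by
                refine Finset.sum_le_sum_of_subset_of_nonneg hsub fun i _ _ => ?_
                exact Real.rpow_nonneg (by positivity) _
            _ = ∑ k ∈ Finset.range (p+1), (((k : ℕ):ℝ) + 1) ^ γ := by
                rw [← Finset.sum_range_reflect (fun k => (((k : ℕ):ℝ) + 1) ^ γ) (p+1)]
                refine Finset.sum_congr rfl fun k hk => ?_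
                have hpk : p + 1 - 1 - k = p - k := by omega
                rw [hpk]
            _ ≤ ∑' j : ℕ, ((j:ℝ)+1) ^ γ := hS.sum_le_tsum _ (fun i _ => hS0 i)
        · -- part 2
          have heq : (Finset.range n).filter (fun k => ¬ k ≤ p) = Finset.Ico (p+1) n := by
            ext k
            simp only [Finset.mem_filter, Finset.mem_range, Finset.mem_Ico]
            omega
          rw [heq, Finset.sum_Ico_eq_sum_range]
          calc ∑ i ∈ Finset.range (n - (p+1)), (((p + 1 + i - (p+1) : ℕ):ℝ) + 1) ^ γ
              = ∑ i ∈ Finset.range (n - (p+1)), (((i : ℕ):ℝ) + 1) ^ γ := by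
                refine Finset.sum_congr rfl fun i _ => ?_
                have hpk : p + 1 + i - (p+1) = i := by omega
                rw [hpk]
            _ ≤ ∑' j : ℕ, ((j:ℝ)+1) ^ γ := hS.sum_le_tsum _ (fun i _ => hS0 i)
    _ = 2 * ∑' j : ℕ, ((j:ℝ)+1) ^ γ := by ring

end Aux3

section Aux4

variable {α : ℝ}

lemma claim_bound (hα : -1 < α) (hα0 : α < 0) {g : ℝ → ℝ} (hg : Measurable g) {M' : ℝ}
    (hgb : ∀ t, |g t| ≤ M') (hgper : Function.Periodic g 1)
    (hgz : ∫ s in (0:ℝ)..1, g s = 0) :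
    ∃ C : ℝ, 0 ≤ C ∧ ∀ (n : ℕ) (u : ℝ), u ∈ Set.Ioc (0:ℝ) (n:ℝ) →
      |∫ v in (0:ℝ)..(n:ℝ), g v * |u - v| ^ α| ≤ C := by
  have hM' : 0 ≤ M' := le_trans (abs_nonneg _) (hgb 0)
  have hc0' : (0:ℝ) ≤ 1 + 2/(α+1) := by
    have : (0:ℝ) ≤ 2/(α+1) := div_nonneg (by norm_num) (by linarith)
    linarith
  set c₃ : ℝ := M' * (3:ℝ) ^ (1-α) * ((1 + 2/(α+1)) + (-α)) with hc₃def
  have hc₃0 : 0 ≤ c₃ := by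
    refine mul_nonneg (mul_nonneg hM' (Real.rpow_nonneg (by norm_num) _)) (by linarith)
  set S : ℝ := ∑' j : ℕ, ((j:ℝ)+1) ^ (α-1) with hSdef
  have hS0 : 0 ≤ S := tsum_nonneg fun j => Real.rpow_nonneg (by positivity) _
  refine ⟨c₃ * (2*S), by positivity, fun n u hu => ?_⟩
  have hsplit : ∫ v in (0:ℝ)..(n:ℝ), g v * |u - v| ^ α
      = ∑ k ∈ Finset.range n, ∫ v in ((k:ℕ):ℝ)..(((k+1:ℕ)):ℝ), g v * |u - v| ^ α := by
    have h := intervalIntegral.sum_integral_adjacent_intervals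
      (a := fun i : ℕ => (i:ℝ)) (n := n) (fun k _ => gK_ii hα hg hgb u _ _)
    simp only [Nat.cast_zero] at h
    exact h.symm
  have hterm : ∀ k : ℕ, ∫ v in ((k:ℕ):ℝ)..(((k+1:ℕ)):ℝ), g v * |u - v| ^ α
      = ∫ s in (0:ℝ)..1, g s * |(u - (k:ℝ)) - s| ^ α := by
    intro k
    have h := intervalIntegral.integral_comp_add_right (a := (0:ℝ)) (b := 1)
      (fun v => g v * |u - v| ^ α) (k:ℝ)
    rw [zero_add] at h
    have hcast : (((k+1:ℕ)):ℝ) = 1 + (k:ℝ) := by push_cast; ring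
    rw [hcast, ← h]
    refine intervalIntegral.integral_congr fun s _ => ?_
    have hg1 : g (s + (k:ℝ)) = g s := by
      have h2 := (hgper.nat_mul k) s
      simpa using h2
    show g (s + (k:ℝ)) * |u - (s + (k:ℝ))| ^ α = g s * |(u - (k:ℝ)) - s| ^ α
    rw [hg1, show u - (s + (k:ℝ)) = (u - (k:ℝ)) - s from by ring]
  calc |∫ v in (0:ℝ)..(n:ℝ), g v * |u - v| ^ α|
      = |∑ k ∈ Finset.range n, ∫ s in (0:ℝ)..1, g s * |(u - (k:ℝ)) - s| ^ α| := by
        rw [hsplit]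
        congr 1
        exact Finset.sum_congr rfl fun k _ => hterm k
    _ ≤ ∑ k ∈ Finset.range n, |∫ s in (0:ℝ)..1, g s * |(u - (k:ℝ)) - s| ^ α| :=
        Finset.abs_sum_le_sum_abs _ _
    _ ≤ ∑ k ∈ Finset.range n, c₃ * (1 + |u - (k:ℝ)|) ^ (α-1) :=
        Finset.sum_le_sum fun k _ => T_all hα hα0 hg hgb hgz (u - (k:ℝ))
    _ = c₃ * ∑ k ∈ Finset.range n, (1 + |u - (k:ℝ)|) ^ (α-1) := by
        rw [Finset.mul_sum]
    _ ≤ c₃ * (2*S) := by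
        refine mul_le_mul_of_nonneg_left ?_ hc₃0
        exact sum_dist (by linarith) n u hu.1

end Aux4

section Aux5

lemma key_est {H : ℝ} (hH1 : 1/2 < H) (hH2 : H < 1) {f : ℝ → ℝ} (hfm : Measurable f) {M : ℝ}
    (hfb : ∀ t, |f t| ≤ M) {m C : ℝ} (hC0 : 0 ≤ C)
    (hC : ∀ (n : ℕ) (u : ℝ), u ∈ Set.Ioc (0:ℝ) (n:ℝ) →
      |∫ v in (0:ℝ)..(n:ℝ), (f v - m) * |u - v| ^ (2*H-2)| ≤ C)
    (n : ℕ) (hn : 0 < n) :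
    |(∫ u in Set.Ioc (0:ℝ) (n:ℝ), ∫ v in Set.Ioc (0:ℝ) (n:ℝ), f u * f v * |u - v| ^ (2*H-2))
      - m^2 * ((n:ℝ)^(2*H) / (H * (2*H-1)))| ≤ ((|m| + M) * C) * n := by
  have hM : 0 ≤ M := le_trans (abs_nonneg _) (hfb 0)
  set α : ℝ := 2*H - 2 with hαdef
  set β : ℝ := 2*H - 1 with hβdef
  have hα : -1 < α := by rw [hαdef]; linarith
  have hα0 : α < 0 := by rw [hαdef]; linarith
  have hβ0 : 0 < β := by rw [hβdef]; linarith
  have hαβ : α + 1 = β := by rw [hαdef, hβdef]; ring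
  set g : ℝ → ℝ := fun t => f t - m with hgdef
  have hgm : Measurable g := hfm.sub measurable_const
  set M' : ℝ := M + |m| with hM'def
  have hgb : ∀ t, |g t| ≤ M' := by
    intro t
    calc |g t| = |f t + (-m)| := by rw [hgdef]; ring_nf
      _ ≤ |f t| + |(-m)| := abs_add_le _ _
      _ ≤ M + |m| := by rw [abs_neg]; exact add_le_add (hfb t) le_rfl
  have hn0 : (0:ℝ) < (n:ℝ) := by exact_mod_cast hn
  have h0n : (0:ℝ) ≤ (n:ℝ) := hn0.le
  set S : Set ℝ := Set.Ioc (0:ℝ) (n:ℝ) with hSdef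
  have hSm : MeasurableSet S := measurableSet_Ioc
  haveI hSfm : IsFiniteMeasure (volume.restrict S) := by
    constructor
    rw [Measure.restrict_apply_univ, hSdef]
    exact measure_Ioc_lt_top
  have hSvol : (volume.restrict S Set.univ).toReal = (n:ℝ) := by
    rw [Measure.restrict_apply_univ, hSdef, Real.volume_Ioc, sub_zero, ENNReal.toReal_ofReal h0n]
  have hconst : ∀ c : ℝ, IntegrableOn (fun _ : ℝ => c) S := fun c =>
    integrableOn_const (by rw [hSdef]; exact measure_Ioc_lt_top.ne)
  have hKint : ∀ u : ℝ, IntegrableOn (fun v => |u - v| ^ α) S := fun u => by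
    rw [hSdef, ← intervalIntegrable_iff_integrableOn_Ioc_of_le h0n]
    exact K_ii hα u 0 (n:ℝ)
  have hfK : ∀ u : ℝ, IntegrableOn (fun v => f v * |u - v| ^ α) S := fun u => by
    rw [hSdef, ← intervalIntegrable_iff_integrableOn_Ioc_of_le h0n]
    exact gK_ii hα hfm hfb u 0 (n:ℝ)
  have hgK : ∀ u : ℝ, IntegrableOn (fun v => g v * |u - v| ^ α) S := fun u => by
    rw [hSdef, ← intervalIntegrable_iff_integrableOn_Ioc_of_le h0n]
    exact gK_ii hα hgm hgb u 0 (n:ℝ)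
  -- B formula and bounds
  have hBform : ∀ u ∈ S, (∫ v in S, |u - v| ^ α) = (u ^ β + ((n:ℝ) - u) ^ β) / β := by
    intro u hu
    rw [hSdef, ← intervalIntegral.integral_of_le h0n]
    rw [hSdef] at hu
    rw [B_formula hα hu.1.le hu.2, hαβ]
  have hBnonneg : ∀ u : ℝ, 0 ≤ ∫ v in S, |u - v| ^ α := fun u =>
    setIntegral_nonneg hSm fun v _ => Real.rpow_nonneg (abs_nonneg _) _
  set CB : ℝ := 2 * (n:ℝ)^β / β with hCBdef
  have hCB0 : 0 ≤ CB := by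
    rw [hCBdef]
    exact div_nonneg (by positivity) hβ0.le
  have hBbound : ∀ u ∈ S, (∫ v in S, |u - v| ^ α) ≤ CB := by
    intro u hu
    rw [hBform u hu, hCBdef]
    rw [hSdef] at hu
    have h1 : u ^ β ≤ (n:ℝ)^β := Real.rpow_le_rpow hu.1.le hu.2 hβ0.le
    have h2 : ((n:ℝ) - u) ^ β ≤ (n:ℝ)^β :=
      Real.rpow_le_rpow (by linarith [hu.2]) (by linarith [hu.1]) hβ0.le
    rw [div_le_div_iff₀ hβ0 hβ0]
    nlinarith
  -- measurability
  have hKm : Measurable fun p : ℝ × ℝ => |p.1 - p.2| ^ α :=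
    ((measurable_fst.sub measurable_snd).abs).pow_const α
  have hBmeas : StronglyMeasurable fun u : ℝ => ∫ v in S, |u - v| ^ α :=
    hKm.stronglyMeasurable.integral_prod_right'
  have hEmeas : StronglyMeasurable fun u : ℝ => ∫ v in S, g v * |u - v| ^ α :=
    ((hgm.comp measurable_snd).mul hKm).stronglyMeasurable.integral_prod_right'
  have hE : ∀ u ∈ S, |∫ v in S, g v * |u - v| ^ α| ≤ C := by
    intro u hu
    rw [hSdef, ← intervalIntegral.integral_of_le h0n]
    rw [hSdef] at hu
    exact hC n u hu
  -- integrability of outer integrands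
  have hfBint : IntegrableOn (fun u => f u * ∫ v in S, |u - v| ^ α) S := by
    refine Integrable.mono' (g := fun _ => M * CB) (hconst _) ?_ ?_
    · exact (hfm.aestronglyMeasurable.restrict).mul hBmeas.aestronglyMeasurable.restrict
    · refine (ae_restrict_iff' hSm).2 (Filter.Eventually.of_forall fun u hu => ?_)
      rw [Real.norm_eq_abs, abs_mul]
      refine mul_le_mul (hfb u) ?_ (abs_nonneg _) hM
      rw [abs_of_nonneg (hBnonneg u)]
      exact hBbound u hu
  have hgBint : IntegrableOn (fun u => g u * ∫ v in S, |u - v| ^ α) S := by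
    refine Integrable.mono' (g := fun _ => M' * CB) (hconst _) ?_ ?_
    · exact (hgm.aestronglyMeasurable.restrict).mul hBmeas.aestronglyMeasurable.restrict
    · refine (ae_restrict_iff' hSm).2 (Filter.Eventually.of_forall fun u hu => ?_)
      rw [Real.norm_eq_abs, abs_mul]
      refine mul_le_mul (hgb u) ?_ (abs_nonneg _) (le_trans (abs_nonneg _) (hgb 0))
      rw [abs_of_nonneg (hBnonneg u)]
      exact hBbound u hu
  have hBint : IntegrableOn (fun u => ∫ v in S, |u - v| ^ α) S := by
    refine Integrable.mono' (g := fun _ => CB) (hconst _) hBmeas.aestronglyMeasurable.restrict ?_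
    refine (ae_restrict_iff' hSm).2 (Filter.Eventually.of_forall fun u hu => ?_)
    rw [Real.norm_eq_abs, abs_of_nonneg (hBnonneg u)]
    exact hBbound u hu
  have hfEint : IntegrableOn (fun u => f u * ∫ v in S, g v * |u - v| ^ α) S := by
    refine Integrable.mono' (g := fun _ => M * C) (hconst _) ?_ ?_
    · exact (hfm.aestronglyMeasurable.restrict).mul hEmeas.aestronglyMeasurable.restrict
    · refine (ae_restrict_iff' hSm).2 (Filter.Eventually.of_forall fun u hu => ?_)
      rw [Real.norm_eq_abs, abs_mul]
      exact mul_le_mul (hfb u) (hE u hu) (abs_nonneg _) hM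
  -- J computation
  have hJ : (∫ u in S, ∫ v in S, |u - v| ^ α) = (n:ℝ)^(2*H) / (H * (2*H-1)) := by
    have h1 : (∫ u in S, ∫ v in S, |u - v| ^ α)
        = ∫ u in S, (u ^ β + ((n:ℝ) - u) ^ β) / β :=
      setIntegral_congr_fun hSm fun u hu => hBform u hu
    rw [h1, hSdef, ← intervalIntegral.integral_of_le h0n]
    have hii1 : IntervalIntegrable (fun u : ℝ => u ^ β) volume 0 (n:ℝ) :=
      intervalIntegrable_rpow' (by linarith)
    have hii2 : IntervalIntegrable (fun u : ℝ => ((n:ℝ) - u) ^ β) volume 0 (n:ℝ) := by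
      have h := (intervalIntegrable_rpow' (by linarith : (-1:ℝ) < β)
        (a := (n:ℝ)) (b := 0)).comp_sub_left (n:ℝ)
      simpa using h
    have e1 : (fun u : ℝ => (u ^ β + ((n:ℝ) - u) ^ β) / β)
        = fun u : ℝ => (1/β) * (u ^ β + ((n:ℝ) - u) ^ β) := by
      funext u; ring
    rw [e1, intervalIntegral.integral_const_mul,
      intervalIntegral.integral_add hii1 hii2,
      intervalIntegral.integral_comp_sub_left (fun x : ℝ => x ^ β) (n:ℝ)]
    rw [sub_self, sub_zero, integral_rpow (Or.inl (by linarith : (-1:ℝ) < β)),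
      Real.zero_rpow (by positivity : β + 1 ≠ 0)]
    have hb1 : β + 1 = 2*H := by rw [hβdef]; ring
    rw [hb1]
    have h2 : (2*H - 1) ≠ 0 := by rw [← hβdef]; exact ne_of_gt hβ0
    have h3 : H ≠ 0 := by positivity
    have h4 : (2*H) ≠ 0 := by positivity
    rw [hβdef]
    field_simp
    ring
  -- Fubini for the g·B term
  have hFub : (∫ u in S, g u * ∫ v in S, |u - v| ^ α)
      = ∫ v in S, ∫ u in S, g u * |u - v| ^ α := by
    have hmeas : AEStronglyMeasurable (Function.uncurry fun u v => g u * |u - v| ^ α)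
        ((volume.restrict S).prod (volume.restrict S)) :=
      (((hgm.comp measurable_fst).mul hKm)).aestronglyMeasurable
    have hFint : Integrable (Function.uncurry fun u v => g u * |u - v| ^ α)
        ((volume.restrict S).prod (volume.restrict S)) := by
      refine (integrable_prod_iff hmeas).2 ⟨?_, ?_⟩
      · exact Filter.Eventually.of_forall fun u => (hKint u).const_mul (g u)
      · refine Integrable.mono' (g := fun _ => M' * CB) (hconst _) ?_ ?_
        · exact (((hgm.comp measurable_fst).mul
            hKm).norm.stronglyMeasurable.integral_prod_right').aestronglyMeasurable.restrict
        · refine (ae_restrict_iff' hSm).2 (Filter.Eventually.of_forall fun u hu => ?_)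
          have he : (∫ v in S, ‖g u * |u - v| ^ α‖) = |g u| * ∫ v in S, |u - v| ^ α := by
            rw [← MeasureTheory.integral_const_mul]
            refine setIntegral_congr_fun hSm fun v _ => ?_
            rw [Real.norm_eq_abs, abs_mul, abs_of_nonneg (Real.rpow_nonneg (abs_nonneg _) _)]
          simp only [Function.uncurry_apply_pair]
          rw [Real.norm_eq_abs, he, abs_of_nonneg
            (mul_nonneg (abs_nonneg _) (hBnonneg u))]
          exact mul_le_mul (hgb u) (hBbound u hu) (hBnonneg u) (le_trans (abs_nonneg _) (hgb 0))
    have h := MeasureTheory.integral_integral_swap hFint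
    have e1 : (∫ u in S, ∫ v in S, g u * |u - v| ^ α)
        = ∫ u in S, g u * ∫ v in S, |u - v| ^ α := by
      refine setIntegral_congr_fun hSm fun u _ => ?_
      exact MeasureTheory.integral_const_mul _ _
    rw [← e1]
    exact h
  have hGB : |∫ u in S, g u * ∫ v in S, |u - v| ^ α| ≤ C * n := by
    rw [hFub]
    have hbd : ∀ᵐ v ∂(volume.restrict S), ‖∫ u in S, g u * |u - v| ^ α‖ ≤ C := by
      refine (ae_restrict_iff' hSm).2 (Filter.Eventually.of_forall fun v hv => ?_)
      rw [Real.norm_eq_abs]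
      have e2 : (∫ u in S, g u * |u - v| ^ α) = ∫ u in S, g u * |v - u| ^ α := by
        refine setIntegral_congr_fun hSm fun u _ => ?_
        rw [abs_sub_comm]
      rw [e2, hSdef, ← intervalIntegral.integral_of_le h0n]
      rw [hSdef] at hv
      exact hC n v hv
    have h := MeasureTheory.norm_integral_le_of_norm_le_const hbd
    rw [measureReal_def, hSvol, Real.norm_eq_abs] at h
    exact h
  have hFE : |∫ u in S, f u * ∫ v in S, g v * |u - v| ^ α| ≤ (M * C) * n := by
    have hbd : ∀ᵐ u ∂(volume.restrict S), ‖f u * ∫ v in S, g v * |u - v| ^ α‖ ≤ M * C := by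
      refine (ae_restrict_iff' hSm).2 (Filter.Eventually.of_forall fun u hu => ?_)
      rw [Real.norm_eq_abs, abs_mul]
      exact mul_le_mul (hfb u) (hE u hu) (abs_nonneg _) hM
    have h := MeasureTheory.norm_integral_le_of_norm_le_const hbd
    rw [measureReal_def, hSvol, Real.norm_eq_abs] at h
    exact h
  -- decomposition of the double integral
  have hinner : ∀ u : ℝ, (∫ v in S, f u * f v * |u - v| ^ α)
      = f u * ∫ v in S, f v * |u - v| ^ α := by
    intro u
    rw [← MeasureTheory.integral_const_mul]
    refine setIntegral_congr_fun hSm fun v _ => ?_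
    ring
  have hAdec : ∀ u : ℝ, (∫ v in S, f v * |u - v| ^ α)
      = m * (∫ v in S, |u - v| ^ α) + ∫ v in S, g v * |u - v| ^ α := by
    intro u
    have e1 : ∀ v : ℝ, f v * |u - v| ^ α = m * |u - v| ^ α + g v * |u - v| ^ α := by
      intro v; rw [hgdef]; ring
    calc (∫ v in S, f v * |u - v| ^ α)
        = ∫ v in S, (m * |u - v| ^ α + g v * |u - v| ^ α) :=
          setIntegral_congr_fun hSm fun v _ => e1 v
      _ = m * (∫ v in S, |u - v| ^ α) + ∫ v in S, g v * |u - v| ^ α := by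
          rw [integral_add ((hKint u).const_mul m) (hgK u), MeasureTheory.integral_const_mul]
  have hIsplit : (∫ u in S, ∫ v in S, f u * f v * |u - v| ^ α)
      = m * (m * (∫ u in S, ∫ v in S, |u - v| ^ α)
          + ∫ u in S, g u * ∫ v in S, |u - v| ^ α)
        + ∫ u in S, f u * ∫ v in S, g v * |u - v| ^ α := by
    have e1 : ∀ u : ℝ, (∫ v in S, f u * f v * |u - v| ^ α)
        = m * (f u * ∫ v in S, |u - v| ^ α) + f u * ∫ v in S, g v * |u - v| ^ α := by
      intro u
      rw [hinner u, hAdec u]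
      ring
    calc (∫ u in S, ∫ v in S, f u * f v * |u - v| ^ α)
        = ∫ u in S, (m * (f u * ∫ v in S, |u - v| ^ α)
            + f u * ∫ v in S, g v * |u - v| ^ α) :=
          setIntegral_congr_fun hSm fun u _ => e1 u
      _ = m * (∫ u in S, f u * ∫ v in S, |u - v| ^ α)
          + ∫ u in S, f u * ∫ v in S, g v * |u - v| ^ α := by
          rw [integral_add (hfBint.const_mul m) hfEint, MeasureTheory.integral_const_mul]
      _ = m * (m * (∫ u in S, ∫ v in S, |u - v| ^ α)
            + ∫ u in S, g u * ∫ v in S, |u - v| ^ α)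
          + ∫ u in S, f u * ∫ v in S, g v * |u - v| ^ α := by
          congr 2
          have e2 : ∀ u : ℝ, f u * (∫ v in S, |u - v| ^ α)
              = m * (∫ v in S, |u - v| ^ α) + g u * ∫ v in S, |u - v| ^ α := by
            intro u; rw [hgdef]; ring
          calc (∫ u in S, f u * ∫ v in S, |u - v| ^ α)
              = ∫ u in S, (m * (∫ v in S, |u - v| ^ α)
                  + g u * ∫ v in S, |u - v| ^ α) :=
                setIntegral_congr_fun hSm fun u _ => e2 u
            _ = m * (∫ u in S, ∫ v in S, |u - v| ^ α)
                + ∫ u in S, g u * ∫ v in S, |u - v| ^ α := by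
                rw [integral_add (hBint.const_mul m) hgBint, MeasureTheory.integral_const_mul]
  rw [hIsplit, hJ]
  have efinal : m * (m * ((n:ℝ)^(2*H) / (H * (2*H-1)))
        + ∫ u in S, g u * ∫ v in S, |u - v| ^ α)
      + (∫ u in S, f u * ∫ v in S, g v * |u - v| ^ α)
      - m^2 * ((n:ℝ)^(2*H) / (H * (2*H-1)))
      = m * (∫ u in S, g u * ∫ v in S, |u - v| ^ α)
        + ∫ u in S, f u * ∫ v in S, g v * |u - v| ^ α := by
    ring
  rw [efinal]
  calc |m * (∫ u in S, g u * ∫ v in S, |u - v| ^ α)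
        + ∫ u in S, f u * ∫ v in S, g v * |u - v| ^ α|
      ≤ |m * (∫ u in S, g u * ∫ v in S, |u - v| ^ α)|
        + |∫ u in S, f u * ∫ v in S, g v * |u - v| ^ α| := abs_add_le _ _
    _ ≤ |m| * (C * n) + (M * C) * n := by
        rw [abs_mul]
        exact add_le_add (mul_le_mul_of_nonneg_left hGB (abs_nonneg m)) hFE
    _ = ((|m| + M) * C) * n := by ring

end Aux5

theorem stmt_4 (H : ℝ) (hH : H ∈ Set.Ioo (1/2 : ℝ) 1)
    (f : ℝ → ℝ) (hfm : Measurable f) (M : ℝ) (hfb : ∀ t, |f t| ≤ M)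
    (hper : Function.Periodic f 1) :
    Tendsto (fun n : ℕ =>
        H * (2 * H - 1) * (n : ℝ) ^ (-(2 * H)) *
          ∫ u in Set.Ioc (0:ℝ) (n:ℝ), ∫ v in Set.Ioc (0:ℝ) (n:ℝ),
            f u * f v * |u - v| ^ (2 * H - 2))
      atTop (nhds ((∫ s in Set.Ioc (0:ℝ) 1, f s) ^ 2)) := by
  obtain ⟨hH1, hH2⟩ := hH
  have hM : 0 ≤ M := le_trans (abs_nonneg _) (hfb 0)
  have hα : -1 < 2*H - 2 := by linarith
  have hα0 : 2*H - 2 < 0 := by linarith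
  set m : ℝ := ∫ s in Set.Ioc (0:ℝ) 1, f s with hmdef
  set g : ℝ → ℝ := fun t => f t - m with hgdef
  have hgm : Measurable g := hfm.sub measurable_const
  have hgb : ∀ t, |g t| ≤ M + |m| := by
    intro t
    calc |g t| = |f t + (-m)| := by rw [hgdef]; ring_nf
      _ ≤ |f t| + |(-m)| := abs_add_le _ _
      _ ≤ M + |m| := by rw [abs_neg]; exact add_le_add (hfb t) le_rfl
  have hgper : Function.Periodic g 1 := by
    intro x
    simp only [hgdef]
    rw [hper x]
  have hgz : ∫ s in (0:ℝ)..1, g s = 0 := by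
    have hfi : IntervalIntegrable f volume 0 1 := g_ii hfm hfb 0 1
    have : ∫ s in (0:ℝ)..1, g s = (∫ s in (0:ℝ)..1, f s) - ∫ s in (0:ℝ)..1, m := by
      rw [← intervalIntegral.integral_sub hfi intervalIntegrable_const]
    rw [this, intervalIntegral.integral_const,
      intervalIntegral.integral_of_le (zero_le_one' ℝ), ← hmdef]
    simp
  obtain ⟨C, hC0, hC⟩ := claim_bound hα hα0 hgm hgb hgper hgz
  have hkey := fun (n : ℕ) (hn : 0 < n) =>
    key_est hH1 hH2 hfm hfb hC0 (fun n u hu => by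
      simpa [hgdef] using hC n u hu) n hn
  set D : ℝ := (|m| + M) * C with hDdef
  have hD0 : 0 ≤ D := mul_nonneg (by positivity) hC0
  have hc : 0 < H * (2*H-1) := by nlinarith
  rw [← tendsto_sub_nhds_zero_iff]
  have hbnd : ∀ᶠ n : ℕ in atTop,
      ‖(H * (2 * H - 1) * (n : ℝ) ^ (-(2 * H)) *
          ∫ u in Set.Ioc (0:ℝ) (n:ℝ), ∫ v in Set.Ioc (0:ℝ) (n:ℝ),
            f u * f v * |u - v| ^ (2 * H - 2)) - m ^ 2‖
        ≤ (H * (2*H-1) * D) * (n:ℝ) ^ (-(2*H-1)) := by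
    filter_upwards [eventually_ge_atTop 1] with n hn
    have hn' : 0 < n := by omega
    have hn0 : (0:ℝ) < (n:ℝ) := by exact_mod_cast hn'
    have hkn := hkey n hn'
    set I : ℝ := ∫ u in Set.Ioc (0:ℝ) (n:ℝ), ∫ v in Set.Ioc (0:ℝ) (n:ℝ),
      f u * f v * |u - v| ^ (2 * H - 2) with hIdef
    have h1 : (n:ℝ) ^ (-(2*H)) * (n:ℝ) ^ (2*H) = 1 := by
      rw [← Real.rpow_add hn0]; norm_num
    have h2 : H * (2*H-1) ≠ 0 := ne_of_gt hc
    have hid : H * (2*H-1) * (n:ℝ)^(-(2*H)) * (m^2 * ((n:ℝ)^(2*H) / (H * (2*H-1)))) = m^2 := by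
      calc H * (2*H-1) * (n:ℝ)^(-(2*H)) * (m^2 * ((n:ℝ)^(2*H) / (H * (2*H-1))))
          = m^2 * ((n:ℝ)^(-(2*H)) * (n:ℝ)^(2*H)) * (H*(2*H-1) / (H*(2*H-1))) := by ring
        _ = m^2 := by rw [h1, div_self h2]; ring
    have hcn : 0 ≤ H * (2*H-1) * (n:ℝ)^(-(2*H)) :=
      mul_nonneg hc.le (Real.rpow_nonneg hn0.le _)
    have hnn : (n:ℝ)^(-(2*H)) * (n:ℝ) = (n:ℝ)^(-(2*H-1)) := by
      rw [show -(2*H-1) = -(2*H) + 1 from by ring, Real.rpow_add hn0, Real.rpow_one]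
    calc ‖H * (2 * H - 1) * (n : ℝ) ^ (-(2 * H)) * I - m ^ 2‖
        = |H * (2*H-1) * (n:ℝ)^(-(2*H))
            * (I - m^2 * ((n:ℝ)^(2*H) / (H * (2*H-1))))| := by
          rw [Real.norm_eq_abs]
          congr 1
          linear_combination hid
      _ = (H * (2*H-1) * (n:ℝ)^(-(2*H)))
            * |I - m^2 * ((n:ℝ)^(2*H) / (H * (2*H-1)))| := by
          rw [abs_mul, abs_of_nonneg hcn]
      _ ≤ (H * (2*H-1) * (n:ℝ)^(-(2*H))) * (D * n) :=
          mul_le_mul_of_nonneg_left hkn hcn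
      _ = (H * (2*H-1) * D) * ((n:ℝ)^(-(2*H)) * (n:ℝ)) := by ring
      _ = (H * (2*H-1) * D) * (n:ℝ)^(-(2*H-1)) := by rw [hnn]
  refine squeeze_zero_norm' hbnd ?_
  have h2 : Tendsto (fun x : ℝ => x ^ (-(2*H-1))) atTop (nhds 0) :=
    tendsto_rpow_neg_atTop (by linarith)
  have h3 : Tendsto (fun n : ℕ => ((n:ℝ))^(-(2*H-1))) atTop (nhds 0) :=
    h2.comp tendsto_natCast_atTop_atTop
  have h4 := h3.const_mul (H*(2*H-1)*D)
  simpa using h4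
end

section
/- For H ∈ (1/2, 1) and α > 0, H(2H−1) ∫₀^∞ ∫₀^∞ e^{−αu} e^{−αv} |u−v|^{2H−2} du dv = α^{−2H} H Γ(2H), and in particular the integral is finite. -/
open MeasureTheory

open Set Real in
theorem stmt_5 (H : ℝ) (hH : H ∈ Set.Ioo (1/2 : ℝ) 1) (α : ℝ) (hα : 0 < α) :
    H * (2 * H - 1) *
      ∫ u in Set.Ioi (0:ℝ), ∫ v in Set.Ioi (0:ℝ),
        Real.exp (-α * u) * Real.exp (-α * v) * |u - v| ^ (2 * H - 2)
      = α ^ (-(2 * H)) * H * Real.Gamma (2 * H) ∧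
    IntegrableOn
      (fun p : ℝ × ℝ =>
        Real.exp (-α * p.1) * Real.exp (-α * p.2) * |p.1 - p.2| ^ (2 * H - 2))
      (Set.Ioi (0:ℝ) ×ˢ Set.Ioi (0:ℝ)) := by
  obtain ⟨hH1, hH2⟩ := hH
  have hb : (0:ℝ) < 2 * H - 1 := by linarith
  set β : ℝ := 2 * H - 2 with hβ
  set f : ℝ × ℝ → ℝ :=
    fun p => Real.exp (-α * p.1) * Real.exp (-α * p.2) * |p.1 - p.2| ^ β with hfdef
  have hfm : Measurable f := by
    refine Measurable.mul (Measurable.mul ?_ ?_) ?_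
    · exact (measurable_fst.const_mul (-α)).exp
    · exact (measurable_snd.const_mul (-α)).exp
    · exact ((measurable_fst.sub measurable_snd).abs).pow measurable_const
  have hfnn : ∀ p, 0 ≤ f p := by
    intro p
    have h1 : (0:ℝ) ≤ |p.1 - p.2| ^ β := Real.rpow_nonneg (abs_nonneg _) _
    positivity
  -- the 1-d Gamma-type integral
  have hCint : IntegrableOn (fun t : ℝ => t ^ β * Real.exp (-(α * t))) (Ioi 0) := by
    have h0 : IntegrableOn (fun x : ℝ => Real.exp (-x) * x ^ (2 * H - 1 - 1)) (Ioi 0) :=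
      Real.GammaIntegral_convergent hb
    have h1 := (integrableOn_Ioi_comp_mul_left_iff
      (fun x => Real.exp (-x) * x ^ (2 * H - 1 - 1)) 0 hα).mpr (by simpa using h0)
    have h2 := h1.const_mul (α ^ (-β))
    refine (integrableOn_congr_fun (fun t ht => ?_) measurableSet_Ioi).mp h2
    have ht' : (0:ℝ) < t := ht
    have hβeq : 2 * H - 1 - 1 = β := by rw [hβ]; ring
    have hαβ : α ^ (-β) * α ^ β = 1 := by
      rw [← Real.rpow_add hα]; simp
    rw [hβeq, Real.mul_rpow hα.le ht'.le]
    calc α ^ (-β) * (Real.exp (-(α * t)) * (α ^ β * t ^ β))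
        = α ^ (-β) * α ^ β * (t ^ β * Real.exp (-(α * t))) := by ring
      _ = t ^ β * Real.exp (-(α * t)) := by rw [hαβ, one_mul]
  set C : ℝ := (1/α) ^ (2*H-1) * Real.Gamma (2*H-1) with hC
  have hCnn : 0 ≤ C := by positivity
  have hCval : ∫ t in Ioi (0:ℝ), t ^ β * Real.exp (-(α * t)) = C := by
    have h := Real.integral_rpow_mul_exp_neg_mul_Ioi hb hα
    rw [hC]
    rw [← h]
    refine setIntegral_congr_fun measurableSet_Ioi fun t ht => ?_
    have : 2 * H - 1 - 1 = β := by rw [hβ]; ring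
    rw [this]
  -- translation for lintegrals
  have hshift : ∀ (v : ℝ) (g : ℝ → ENNReal), Measurable g →
      ∫⁻ u in Ioi v, g u = ∫⁻ t in Ioi (0:ℝ), g (t + v) := by
    intro v g hg
    have hmp : MeasurePreserving (fun t : ℝ => t + v) volume volume :=
      measurePreserving_add_right volume v
    have h := hmp.setLIntegral_comp_preimage (measurableSet_Ioi (a := v)) hg
    rw [← h]
    congr 1
    ext x
    simp [Set.mem_preimage]
  -- the inner integral for v > 0
  have hinner : ∀ v : ℝ, 0 < v →
      ∫⁻ u in Ioi v, ENNReal.ofReal (f (u, v))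
        = ENNReal.ofReal (Real.exp (-(2*α) * v) * C) := by
    intro v hv
    have hgm : Measurable fun u : ℝ => ENNReal.ofReal (f (u, v)) :=
      (hfm.comp (measurable_id.prodMk measurable_const)).ennreal_ofReal
    rw [hshift v _ hgm]
    have hcongr : ∀ t ∈ Ioi (0:ℝ),
        ENNReal.ofReal (f (t + v, v))
          = ENNReal.ofReal (Real.exp (-(2*α) * v) * (t ^ β * Real.exp (-(α * t)))) := by
      intro t ht
      have ht' : (0:ℝ) < t := ht
      congr 1
      rw [hfdef]
      simp only [add_sub_cancel_right, abs_of_pos ht']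
      rw [← Real.exp_add, show -α * (t + v) + -α * v = -(2*α) * v + -(α * t) by ring,
        Real.exp_add]
      ring
    rw [setLIntegral_congr_fun measurableSet_Ioi hcongr]
    rw [← ofReal_integral_eq_lintegral_ofReal (hCint.const_mul _)]
    · rw [integral_const_mul, hCval]
    · filter_upwards [self_mem_ae_restrict (measurableSet_Ioi (a := (0:ℝ)))] with t ht
      have ht' : (0:ℝ) < t := ht
      positivity
  -- regions
  set T : Set (ℝ × ℝ) := {p | 0 < p.2 ∧ p.2 < p.1} with hT
  set T' : Set (ℝ × ℝ) := {p | 0 < p.1 ∧ p.1 < p.2} with hT'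
  have hTm : MeasurableSet T :=
    (measurableSet_lt measurable_const measurable_snd).inter
      (measurableSet_lt measurable_snd measurable_fst)
  have hTm' : MeasurableSet T' :=
    (measurableSet_lt measurable_const measurable_fst).inter
      (measurableSet_lt measurable_fst measurable_snd)
  -- lintegral over T
  have h2α : (0:ℝ) < 2 * α := by positivity
  have hexpint : ∫ v in Ioi (0:ℝ), Real.exp (-(2*α) * v) = (2*α)⁻¹ := by
    have h := integral_comp_mul_left_Ioi (fun x => Real.exp (-x)) 0 h2α
    simp only [mul_zero, integral_exp_neg_Ioi, neg_zero, Real.exp_zero, smul_eq_mul,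
      mul_one] at h
    rw [← h]
    refine setIntegral_congr_fun measurableSet_Ioi fun v _ => ?_
    ring_nf
  have hLT : ∫⁻ p in T, ENNReal.ofReal (f p) = ENNReal.ofReal (C / (2*α)) := by
    have hGm : Measurable (T.indicator fun p => ENNReal.ofReal (f p)) :=
      (hfm.ennreal_ofReal).indicator hTm
    rw [← lintegral_indicator hTm]
    rw [show (volume : Measure (ℝ × ℝ)) = (volume : Measure ℝ).prod volume from rfl]
    rw [lintegral_prod_symm' _ hGm]
    have hstep : ∀ v : ℝ,
        (∫⁻ u, T.indicator (fun p => ENNReal.ofReal (f p)) (u, v))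
          = (Ioi (0:ℝ)).indicator
              (fun v => ENNReal.ofReal (Real.exp (-(2*α) * v) * C)) v := by
      intro v
      by_cases hv : 0 < v
      · have h1 : ∀ u, T.indicator (fun p => ENNReal.ofReal (f p)) (u, v)
            = (Ioi v).indicator (fun u => ENNReal.ofReal (f (u, v))) u := by
          intro u
          by_cases hu : v < u
          · rw [Set.indicator_of_mem (show (u, v) ∈ T from ⟨hv, hu⟩),
              Set.indicator_of_mem (show u ∈ Ioi v from hu)]
          · rw [Set.indicator_of_notMem (show (u, v) ∉ T from fun h => hu h.2),
              Set.indicator_of_notMem (show u ∉ Ioi v from fun h => hu h)]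
        simp_rw [h1]
        rw [lintegral_indicator measurableSet_Ioi, hinner v hv,
          Set.indicator_of_mem (show v ∈ Ioi (0:ℝ) from hv)]
      · have h1 : ∀ u, T.indicator (fun p => ENNReal.ofReal (f p)) (u, v) = 0 := by
          intro u
          exact Set.indicator_of_notMem (fun h => hv h.1) _
        simp_rw [h1]
        rw [lintegral_zero, Set.indicator_of_notMem (show v ∉ Ioi (0:ℝ) from fun h => hv h)]
    simp_rw [hstep]
    rw [lintegral_indicator measurableSet_Ioi]
    rw [← ofReal_integral_eq_lintegral_ofReal
      ((exp_neg_integrableOn_Ioi 0 h2α).mul_const C)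
      (Filter.Eventually.of_forall fun v => by positivity)]
    rw [integral_mul_const, hexpint]
    congr 1
    field_simp
  -- swap
  have hswap : ∫⁻ p in T', ENNReal.ofReal (f p) = ∫⁻ p in T, ENNReal.ofReal (f p) := by
    have hmp : MeasurePreserving (Prod.swap : ℝ × ℝ → ℝ × ℝ) volume volume :=
      Measure.measurePreserving_swap
    have h := hmp.setLIntegral_comp_preimage hTm (hfm.ennreal_ofReal)
    rw [← h]
    have hpre : (Prod.swap : ℝ × ℝ → ℝ × ℝ) ⁻¹' T = T' := by
      ext p; simp [hT, hT', Set.mem_preimage, and_comm]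
    rw [hpre]
    refine setLIntegral_congr_fun hTm' (fun p _ => ?_)
    congr 1
    rw [hfdef]
    simp only [Prod.fst_swap, Prod.snd_swap]
    rw [abs_sub_comm]
    ring
  -- decomposition of the quadrant
  have hdiag : volume {p : ℝ × ℝ | p.1 = p.2} = 0 := by
    have hm : MeasurableSet {p : ℝ × ℝ | p.1 = p.2} :=
      measurableSet_eq_fun measurable_fst measurable_snd
    rw [show (volume : Measure (ℝ × ℝ)) = (volume : Measure ℝ).prod volume from rfl,
      Measure.prod_apply hm]
    have hpre : ∀ x : ℝ, (Prod.mk x ⁻¹' {p : ℝ × ℝ | p.1 = p.2}) = {x} := by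
      intro x; ext y; simp [eq_comm]
    simp_rw [hpre]
    simp
  have hdisj : Disjoint T T' := by
    rw [Set.disjoint_left]
    rintro p ⟨_, h1⟩ ⟨_, h2⟩
    exact absurd (h1.trans h2) (lt_irrefl _)
  have hsub1 : (Ioi (0:ℝ) ×ˢ Ioi (0:ℝ)) \ (T ∪ T') ⊆ {p : ℝ × ℝ | p.1 = p.2} := by
    rintro p ⟨⟨hp1, hp2⟩, hn⟩
    by_contra hne
    rcases lt_or_gt_of_ne hne with h | h
    · exact hn (Or.inr ⟨hp1, h⟩)
    · exact hn (Or.inl ⟨hp2, h⟩)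
  have hsub2 : (T ∪ T' : Set (ℝ × ℝ)) ⊆ Ioi 0 ×ˢ Ioi 0 := by
    rintro p (⟨h1, h2⟩ | ⟨h1, h2⟩)
    · exact ⟨h1.trans h2, h1⟩
    · exact ⟨h1, h1.trans h2⟩
  have hsets : (Ioi (0:ℝ) ×ˢ Ioi (0:ℝ) : Set (ℝ × ℝ)) =ᵐ[volume] (T ∪ T' : Set (ℝ × ℝ)) := by
    rw [MeasureTheory.ae_eq_set]
    refine ⟨measure_mono_null hsub1 hdiag, ?_⟩
    rw [Set.diff_eq_empty.mpr hsub2]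
    exact measure_empty
  -- value of the lintegral over the quadrant
  have hL : ∫⁻ p in Ioi (0:ℝ) ×ˢ Ioi (0:ℝ), ENNReal.ofReal (f p)
      = ENNReal.ofReal (C / α) := by
    rw [setLIntegral_congr hsets, lintegral_union hTm' hdisj, hLT, hswap, hLT,
      ← ENNReal.ofReal_add (by positivity) (by positivity)]
    congr 1
    field_simp
    ring
  -- integrability
  have hint : IntegrableOn f (Ioi (0:ℝ) ×ˢ Ioi (0:ℝ)) := by
    refine ⟨hfm.aestronglyMeasurable, ?_⟩
    rw [hasFiniteIntegral_iff_ofReal (Filter.Eventually.of_forall hfnn)]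
    rw [hL]
    exact ENNReal.ofReal_lt_top
  refine ⟨?_, hint⟩
  -- value of the Bochner integral
  have hval : ∫ p in Ioi (0:ℝ) ×ˢ Ioi (0:ℝ), f p = C / α := by
    rw [integral_eq_lintegral_of_nonneg_ae (Filter.Eventually.of_forall hfnn)
      hfm.aestronglyMeasurable, hL, ENNReal.toReal_ofReal (by positivity)]
  have hiter : ∫ u in Ioi (0:ℝ), ∫ v in Ioi (0:ℝ), f (u, v) = C / α := by
    rw [← hval]
    exact (setIntegral_prod f hint).symm
  have hgoal_eq : (∫ u in Set.Ioi (0:ℝ), ∫ v in Set.Ioi (0:ℝ),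
      Real.exp (-α * u) * Real.exp (-α * v) * |u - v| ^ β) = C / α := hiter
  rw [hgoal_eq]
  -- final arithmetic
  have hΓ : Real.Gamma (2*H) = (2*H-1) * Real.Gamma (2*H-1) := by
    rw [show 2*H = (2*H-1) + 1 by ring, Real.Gamma_add_one hb.ne']
    ring_nf
  have hpow : α ^ (-(2*H)) = (1/α) ^ (2*H-1) * α⁻¹ := by
    rw [one_div, Real.inv_rpow hα.le, ← Real.rpow_neg hα.le,
      show (α⁻¹ : ℝ) = α ^ (-1:ℝ) by rw [Real.rpow_neg hα.le, Real.rpow_one],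
      ← Real.rpow_add hα]
    congr 1
    ring
  rw [hΓ, hpow, hC]
  field_simp
end
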